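/- The function h₁₁(x) = (1 − 2x) tan(πx) is strictly increasing on (0, 1/2), with limits h₁₁(0⁺) = 0 and h₁₁((1/2)⁻) = 2/π. -/

import Mathlib

/-!
With `t = π (1 - 2x)` and `sin t = 2 sin (πx) cos (πx)`, the derivative of `h₁₁` is
`(t - sin t) / cos² (πx)`, positive on `(0, 1/2)` since `sin t < t` for `t > 0`.
At `1/2` write `h₁₁ x = -2 sin (πx) · (x - 1/2) / cos (πx)`: the last factor is the inverse slope
of `cos (π ·)` at its zero `1/2`, which tends to `1 / (-π)`.
-/

open Set Filter

noncomputable def h₁₁ (x : ℝ) : ℝ := (1 - 2 * x) * Real.tan (Real.pi * x)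

open Real Topology

theorem HasDerivAt.tendsto_sub_div_of_eq_zero {𝕜 : Type*} [NontriviallyNormedField 𝕜]
    {f : 𝕜 → 𝕜} {f' a : 𝕜} (hf : HasDerivAt f f' a) (ha : f a = 0) (hf' : f' ≠ 0) :
    Tendsto (fun x => (x - a) / f x) (𝓝[≠] a) (𝓝 f'⁻¹) := by
  have := (hasDerivAt_iff_tendsto_slope.mp hf).inv₀ hf'
  simpa [slope_fun_def_field, ha] using this

-- Valid even where `cos (π x) = 0`, as both sides are then `0` by the convention `a / 0 = 0`.
theorem h₁₁_eq_sin_mul_div_cos (x : ℝ) : h₁₁ x = -2 * sin (π * x) * ((x - 1 / 2) / cos (π * x)) := by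
  rw [h₁₁, tan_eq_sin_div_cos]
  ring

theorem hasDerivAt_h₁₁ {x : ℝ} (hx : cos (π * x) ≠ 0) :
    HasDerivAt h₁₁ ((π * (1 - 2 * x) - sin (π * (1 - 2 * x))) / cos (π * x) ^ 2) x := by
  have htan : HasDerivAt (fun y => tan (π * y)) (1 / cos (π * x) ^ 2 * π) x :=
    (hasDerivAt_tan hx).comp x ((hasDerivAt_id x).const_mul π |>.congr_deriv (mul_one π))
  have hlin : HasDerivAt (fun y : ℝ => 1 - 2 * y) (-2) x := by
    simpa using ((hasDerivAt_id x).const_mul 2).const_sub 1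
  refine (hlin.mul htan).congr_deriv ?_
  rw [show π * (1 - 2 * x) = π - 2 * (π * x) by ring, sin_pi_sub, sin_two_mul, tan_eq_sin_div_cos]
  field_simp
  ring

theorem cos_pi_mul_pos {x : ℝ} (hx : x ∈ Ioo (-(1 / 2)) (1 / 2)) : 0 < cos (π * x) := by
  apply cos_pos_of_mem_Ioo
  constructor <;> nlinarith [pi_pos, hx.1, hx.2]

theorem strictMonoOn_h₁₁ : StrictMonoOn h₁₁ (Ioo 0 (1 / 2)) := by
  have hcos {x : ℝ} (hx : x ∈ Ioo 0 (1 / 2)) : cos (π * x) ≠ 0 :=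
    (cos_pi_mul_pos ⟨by linarith [hx.1], hx.2⟩).ne'
  refine strictMonoOn_of_hasDerivWithinAt_pos (convex_Ioo _ _)
    (fun x hx => (hasDerivAt_h₁₁ (hcos hx)).continuousAt.continuousWithinAt)
    (fun x hx => (hasDerivAt_h₁₁ (hcos (interior_subset hx))).hasDerivWithinAt) ?_
  rw [interior_Ioo]
  intro x hx
  have hsin : sin (π * (1 - 2 * x)) < π * (1 - 2 * x) := sin_lt (by nlinarith [pi_pos, hx.2])
  exact div_pos (by linarith) (pow_pos (cos_pi_mul_pos ⟨by linarith [hx.1], hx.2⟩) 2)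

theorem tendsto_h₁₁_zero : Tendsto h₁₁ (𝓝 0) (𝓝 0) := by
  simpa [h₁₁] using (hasDerivAt_h₁₁ (x := 0) (by simp)).continuousAt.tendsto

theorem tendsto_h₁₁_half : Tendsto h₁₁ (𝓝[≠] (1 / 2)) (𝓝 (2 / π)) := by
  have hhalf : π * (1 / 2) = π / 2 := by ring
  have hcos : HasDerivAt (fun x => cos (π * x)) (-π) (1 / 2) := by
    refine (((hasDerivAt_id' (1 / 2 : ℝ)).const_mul π).cos).congr_deriv ?_
    rw [hhalf, sin_pi_div_two]
    ring
  have hquot := hcos.tendsto_sub_div_of_eq_zero (by simp only [hhalf, cos_pi_div_two])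
    (neg_ne_zero.mpr pi_ne_zero)
  have hsin : Tendsto (fun x => sin (π * x)) (𝓝 (1 / 2)) (𝓝 1) := by
    have := (by fun_prop : Continuous fun x => sin (π * x)).tendsto (1 / 2)
    rwa [hhalf, sin_pi_div_two] at this
  rw [funext h₁₁_eq_sin_mul_div_cos]
  convert ((hsin.mono_left nhdsWithin_le_nhds).const_mul (-2)).mul hquot using 2
  field_simp

theorem h11_props :
    StrictMonoOn h₁₁ (Ioo 0 (1 / 2)) ∧
    Tendsto h₁₁ (nhdsWithin 0 (Ioi 0)) (nhds 0) ∧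
    Tendsto h₁₁ (nhdsWithin (1 / 2) (Iio (1 / 2))) (nhds (2 / Real.pi)) :=
  ⟨strictMonoOn_h₁₁, tendsto_h₁₁_zero.mono_left nhdsWithin_le_nhds,
    tendsto_h₁₁_half.mono_left (nhdsWithin_mono _ fun _ hx => ne_of_lt hx)⟩
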